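/- The n^ε-way merge sort recurrences T₁(n, ε) = n^ε·T₁(n^{1-ε}, ε/(1-ε)) + c·n^{1+ε} with base T₁(n, 1) = c·n², and T∞(n, ε) = T∞(n^{1-ε}, ε/(1-ε)) + c'·log n with base T∞(n,1) = c'·log n, where 1/ε is an integer, solve to T₁(n, ε) = O((1/ε)·n^{1+ε}) and T∞(n, ε) = O((ε + 1/ε)·log n). -/

import Mathlib

/-! With `ε = 1/(k+1)` one has `1 - ε = k/(k+1)` and `ε/(1-ε) = 1/k`, so one level of the
recurrence turns the parameter `1/(k+1)` into `1/k`, and `(n^{1-ε})^{1+1/k} = n`. Hence an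
induction on `k` shows `T₁(n, 1/k) ≤ c·k·n^{1+1/k}`: each level adds one `c·n^{1+ε}`. For the
span, each level multiplies the inherited bound by `1 - ε` and adds `c'·log n`; the coefficient
`1/k + k` satisfies `(1/k + k)(1 - 1/(k+1)) + 1 ≤ 1/(k+1) + (k+1)`. -/

open Real

namespace MergeSort

lemma one_sub_one_div_add_one {k : ℝ} (hk : 0 ≤ k) : 1 - 1 / (k + 1) = k / (k + 1) := by
  field_simp
  ring

lemma one_div_add_one_div_one_sub {k : ℝ} (hk : 0 < k) :
    1 / (k + 1) / (1 - 1 / (k + 1)) = 1 / k := by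
  rw [one_sub_one_div_add_one hk.le]
  field_simp

lemma rpow_one_sub_one_div_add_one_rpow {k n : ℝ} (hk : 0 < k) (hn : 0 ≤ n) :
    (n ^ (1 - 1 / (k + 1))) ^ (1 + 1 / k) = n := by
  rw [← rpow_mul hn, one_sub_one_div_add_one hk.le]
  convert rpow_one n using 2
  field_simp

lemma span_coeff_step {k : ℝ} (hk : 0 < k) :
    (1 / k + k) * (1 - 1 / (k + 1)) + 1 ≤ 1 / (k + 1) + (k + 1) := by
  rw [one_sub_one_div_add_one hk.le, ← sub_nonneg]
  have key : 1 / (k + 1) + (k + 1) - ((1 / k + k) * (k / (k + 1)) + 1) = k / (k + 1) := by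
    field_simp
    ring
  rw [key]
  positivity

lemma one_div_add_one_mem_Ioo {k : ℝ} (hk : 0 < k) : 1 / (k + 1) ∈ Set.Ioo 0 1 :=
  ⟨by positivity, by rw [div_lt_one (by linarith)]; linarith⟩

variable {c : ℝ} {T : ℝ → ℝ → ℝ}

theorem work_le (hbase : ∀ n : ℝ, 1 ≤ n → T n 1 ≤ c * n ^ 2)
    (hrec : ∀ n ε : ℝ, 1 ≤ n → 0 < ε → ε < 1 →
      T n ε ≤ n ^ ε * T (n ^ (1 - ε)) (ε / (1 - ε)) + c * n ^ (1 + ε))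
    (k : ℕ) (hk : 1 ≤ k) (n : ℝ) (hn : 1 ≤ n) :
    T n (1 / k) ≤ c * k * n ^ (1 + 1 / (k : ℝ)) := by
  induction k, hk using Nat.le_induction generalizing n with
  | base =>
    norm_num
    exact_mod_cast hbase n hn
  | succ k hk ih =>
    have hk0 : (0 : ℝ) < k := by exact_mod_cast hk
    have hn0 : 0 < n := by linarith
    obtain ⟨hε0, hε1⟩ := one_div_add_one_mem_Ioo hk0
    set ε := 1 / ((k : ℝ) + 1) with hε
    have hsub : 1 ≤ n ^ (1 - ε) := one_le_rpow hn (by linarith)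
    have hinner : T (n ^ (1 - ε)) (1 / k) ≤ c * k * n := by
      simpa only [hε, rpow_one_sub_one_div_add_one_rpow hk0 hn0.le] using ih _ hsub
    push_cast
    calc T n ε ≤ n ^ ε * T (n ^ (1 - ε)) (1 / k) + c * n ^ (1 + ε) := by
          simpa only [ε, one_div_add_one_div_one_sub hk0] using hrec n ε hn hε0 hε1
      _ ≤ n ^ ε * (c * k * n) + c * n ^ (1 + ε) := by gcongr
      _ = c * (k + 1) * n ^ (1 + ε) := by
          rw [add_comm 1 ε, rpow_add hn0, rpow_one]
          ring

theorem span_le (hc : 0 ≤ c) (hbase : ∀ n : ℝ, 1 ≤ n → T n 1 ≤ c * log n)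
    (hrec : ∀ n ε : ℝ, 1 ≤ n → 0 < ε → ε < 1 →
      T n ε ≤ T (n ^ (1 - ε)) (ε / (1 - ε)) + c * log n)
    (k : ℕ) (hk : 1 ≤ k) (n : ℝ) (hn : 1 ≤ n) :
    T n (1 / k) ≤ c * (1 / k + k) * log n := by
  induction k, hk using Nat.le_induction generalizing n with
  | base =>
    norm_num
    nlinarith [hbase n hn, mul_nonneg hc (log_nonneg hn)]
  | succ k hk ih =>
    have hk0 : (0 : ℝ) < k := by exact_mod_cast hk
    have hn0 : 0 < n := by linarith
    have hlog : 0 ≤ log n := log_nonneg hn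
    obtain ⟨hε0, hε1⟩ := one_div_add_one_mem_Ioo hk0
    set ε := 1 / ((k : ℝ) + 1)
    have hsub : 1 ≤ n ^ (1 - ε) := one_le_rpow hn (by linarith)
    have hinner : T (n ^ (1 - ε)) (1 / k) ≤ c * (1 / k + k) * ((1 - ε) * log n) := by
      simpa only [log_rpow hn0] using ih _ hsub
    push_cast
    calc T n ε ≤ T (n ^ (1 - ε)) (1 / k) + c * log n := by
          simpa only [ε, one_div_add_one_div_one_sub hk0] using hrec n ε hn hε0 hε1
      _ ≤ c * (1 / k + k) * ((1 - ε) * log n) + c * log n := by gcongr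
      _ = c * ((1 / k + k) * (1 - ε) + 1) * log n := by ring
      _ ≤ c * (ε + (k + 1)) * log n := by
          gcongr c * ?_ * _
          exact span_coeff_step hk0

end MergeSort

theorem stmt_18_general (c c' : ℝ) (hc' : 0 < c')
    (T₁ Tinf : ℝ → ℝ → ℝ)
    (hT₁base : ∀ n : ℝ, 1 ≤ n → T₁ n 1 ≤ c * n ^ 2)
    (hTinfbase : ∀ n : ℝ, 1 ≤ n → Tinf n 1 ≤ c' * Real.log n)
    (hT₁rec : ∀ n ε : ℝ, 1 ≤ n → 0 < ε → ε < 1 →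
      T₁ n ε ≤ n ^ ε * T₁ (n ^ (1 - ε)) (ε / (1 - ε)) + c * n ^ (1 + ε))
    (hTinfrec : ∀ n ε : ℝ, 1 ≤ n → 0 < ε → ε < 1 →
      Tinf n ε ≤ Tinf (n ^ (1 - ε)) (ε / (1 - ε)) + c' * Real.log n) :
    ∀ ε : ℝ, (∃ k : ℕ, 1 ≤ k ∧ ε = 1 / (k : ℝ)) → ∀ n : ℝ, 1 ≤ n →
      T₁ n ε ≤ c * (1 / ε) * n ^ (1 + ε) ∧
      Tinf n ε ≤ c' * (ε + 1 / ε) * Real.log n := by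
  rintro ε ⟨k, hk, rfl⟩ n hn
  rw [one_div_one_div]
  exact ⟨MergeSort.work_le hT₁base hT₁rec k hk n hn,
    MergeSort.span_le hc'.le hTinfbase hTinfrec k hk n hn⟩

/-- n^ε-way merge sort: if `T₁(n,1) ≤ c·n²`, `Tinf(n,1) ≤ c'·log n` and for
`ε ∈ (0,1)` the recurrences
`T₁(n,ε) ≤ n^ε·T₁(n^{1-ε}, ε/(1-ε)) + c·n^{1+ε}` and
`Tinf(n,ε) ≤ Tinf(n^{1-ε}, ε/(1-ε)) + c'·log n` hold, then for every `ε = 1/k`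
with `k ≥ 1` a natural number and every `n ≥ 1`,
`T₁(n,ε) ≤ c·(1/ε)·n^{1+ε}` and `Tinf(n,ε) ≤ c'·(ε + 1/ε)·log n`. -/
theorem stmt_18 (c c' : ℝ) (hc : 0 < c) (hc' : 0 < c')
    (T₁ Tinf : ℝ → ℝ → ℝ)
    (hT₁base : ∀ n : ℝ, 1 ≤ n → T₁ n 1 ≤ c * n ^ 2)
    (hTinfbase : ∀ n : ℝ, 1 ≤ n → Tinf n 1 ≤ c' * Real.log n)
    (hT₁rec : ∀ n ε : ℝ, 1 ≤ n → 0 < ε → ε < 1 →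
      T₁ n ε ≤ n ^ ε * T₁ (n ^ (1 - ε)) (ε / (1 - ε)) + c * n ^ (1 + ε))
    (hTinfrec : ∀ n ε : ℝ, 1 ≤ n → 0 < ε → ε < 1 →
      Tinf n ε ≤ Tinf (n ^ (1 - ε)) (ε / (1 - ε)) + c' * Real.log n) :
    ∀ ε : ℝ, (∃ k : ℕ, 1 ≤ k ∧ ε = 1 / (k : ℝ)) → ∀ n : ℝ, 1 ≤ n →
      T₁ n ε ≤ c * (1 / ε) * n ^ (1 + ε) ∧
      Tinf n ε ≤ c' * (ε + 1 / ε) * Real.log n :=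
  stmt_18_general c c' hc' T₁ Tinf hT₁base hTinfbase hT₁rec hTinfrec
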